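/- arXiv:1803.00228 — 3 statements merged into one kernel-verified Lean document; each statement's English description precedes it below -/
import Mathlib

section
/- The Kronecker product is compatible with both PRO compositions: (A ↔ B) ⊙ (A' ↔ B') = (A ⊙ A') ↔ (B ⊙ B') and (A ↕ B) ⊙ (A' ↕ B') = (A ⊙ A') ↕ (B ⊙ B'), whenever the compositions are defined. Consequently the map A ⊗ B ↦ A ⊙ B induces an isomorphism of 𝕂-ModPros 𝕂(M) ⊗ 𝕂(N) ≅ 𝕂(MN). -/
open BigOperators

/-- Hypermatrices: families of scalars indexed by an `m`-tuple and an `n`-tuple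
of indices in `[N]`, i.e. `N^m × N^n` matrices. -/
abbrev HM (K : Type) (N m n : ℕ) := (Fin m → Fin N) → (Fin n → Fin N) → K

/-- Horizontal composition of hypermatrices (Kronecker product of rectangular
matrices). -/
def hcomp {K : Type} [Mul K] {N m n m' n' : ℕ} (A : HM K N m n) (B : HM K N m' n') :
    HM K N (m + m') (n + n') :=
  fun I J =>
    A (fun i => I (Fin.castAdd m' i)) (fun j => J (Fin.castAdd n' j)) *
    B (fun i => I (Fin.natAdd m i)) (fun j => J (Fin.natAdd n j))

/-- Vertical composition of hypermatrices (matrix product). -/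
def vcomp {K : Type} [NonUnitalNonAssocSemiring K] {N m n p : ℕ}
    (A : HM K N m n) (B : HM K N n p) : HM K N m p :=
  fun I J => ∑ L : Fin n → Fin N, A I L * B L J

/-- The identity hypermatrix `Id_n = I(N)^{↔ n}`. -/
def idHM (K : Type) [Zero K] [One K] (N n : ℕ) : HM K N n n :=
  fun I J => if I = J then 1 else 0

/-- The elementary hypermatrix `E(N,p,q;I₀,J₀)` with entry 1 at `(I₀,J₀)` and 0
elsewhere. -/
def EHM (K : Type) [Zero K] [One K] (N p q : ℕ)
    (I0 : Fin p → Fin N) (J0 : Fin q → Fin N) : HM K N p q :=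
  fun I J => if I = I0 ∧ J = J0 then 1 else 0

/-- The first component (`i % M`) of the index decomposition `i = q·M + r`. -/
def fmod (M N : ℕ) [NeZero M] (i : Fin (M * N)) : Fin M :=
  ⟨i.val % M, Nat.mod_lt _ (Nat.pos_of_ne_zero (NeZero.ne M))⟩

/-- The second component (`i / M`) of the index decomposition `i = q·M + r`. -/
def fdiv (M N : ℕ) [NeZero M] (i : Fin (M * N)) : Fin N :=
  ⟨i.val / M, by
    have hM : 0 < M := Nat.pos_of_ne_zero (NeZero.ne M)
    exact (Nat.div_lt_iff_lt_mul hM).mpr (lt_of_lt_of_eq i.isLt (Nat.mul_comm M N))⟩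

/-- Kronecker product of hypermatrices:
`(A ⊙ B)^I_J = A^{I%M}_{J%M} · B^{I/M}_{J/M}`. -/
def kron {K : Type} [Mul K] {M N p q : ℕ} [NeZero M]
    (A : HM K M p q) (B : HM K N p q) : HM K (M * N) p q :=
  fun I J =>
    A (fun t => fmod M N (I t)) (fun t => fmod M N (J t)) *
    B (fun t => fdiv M N (I t)) (fun t => fdiv M N (J t))

/-! Under the digit decomposition `i ↦ (i % M, i / M) : Fin (M * N) ≃ Fin M × Fin N`, index tuples
in `[MN]^n` are pairs of tuples in `[M]^n × [N]^n`, and `A ⊙ B` becomes the ordinary Kronecker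
product of `A` and `B` viewed as matrices indexed by such tuples. Compatibility with `↔` is then
commutativity of multiplication, compatibility with `↕` is the mixed-product property (the sum over
`[MN]^n` splits as a double sum over `[M]^n × [N]^n`), and the isomorphism is the tensor-product
Kronecker equivalence `kroneckerTMulLinearEquiv`, reindexed. -/

/-- Definitionally `i ↦ (fmod M N i, fdiv M N i)`; the proofs below rely on this. -/
def fmodFdivEquiv (M N : ℕ) : Fin (M * N) ≃ Fin M × Fin N :=
  ((finCongr (Nat.mul_comm M N)).trans finProdFinEquiv.symm).trans (Equiv.prodComm _ _)

def fmodFdivPiEquiv (M N n : ℕ) :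
    (Fin n → Fin (M * N)) ≃ (Fin n → Fin M) × (Fin n → Fin N) :=
  (Equiv.piCongrRight fun _ => fmodFdivEquiv M N).trans (Equiv.arrowProdEquivProdArrow _ _ _)

section

variable {K : Type} {M N : ℕ} [NeZero M]

theorem kron_hcomp [CommSemigroup K] {m n m' n' : ℕ} (A : HM K M m n) (B : HM K M m' n')
    (A' : HM K N m n) (B' : HM K N m' n') :
    kron (hcomp A B) (hcomp A' B') = hcomp (kron A A') (kron B B') := by
  funext I J
  exact mul_mul_mul_comm _ _ _ _

theorem kron_vcomp [NonUnitalCommSemiring K] {m n p : ℕ} (A : HM K M m n) (B : HM K M n p)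
    (A' : HM K N m n) (B' : HM K N n p) :
    kron (vcomp A B) (vcomp A' B') = vcomp (kron A A') (kron B B') := by
  funext I J
  rw [kron, vcomp, vcomp, Finset.sum_mul_sum, vcomp, ← Fintype.sum_prod_type',
    ← (fmodFdivPiEquiv M N n).sum_comp]
  exact Finset.sum_congr rfl fun L _ => mul_mul_mul_comm _ _ _ _

open TensorProduct

variable (K M N) in
noncomputable def kronLinearEquiv [CommSemiring K] (p q : ℕ) :
    HM K M p q ⊗[K] HM K N p q ≃ₗ[K] HM K (M * N) p q :=
  (kroneckerTMulLinearEquiv _ _ _ _ K K K K).trans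
    ((TensorProduct.lid K K).mapMatrix.trans
      (Matrix.reindexLinearEquiv K K (fmodFdivPiEquiv M N p).symm (fmodFdivPiEquiv M N q).symm))

theorem kronLinearEquiv_tmul [CommSemiring K] {p q : ℕ} (A : HM K M p q) (B : HM K N p q) :
    kronLinearEquiv K M N p q (A ⊗ₜ B) = kron A B :=
  rfl

end

open TensorProduct in
/-- The Kronecker product is compatible with both PRO compositions, and consequently
`A ⊗ B ↦ A ⊙ B` induces an isomorphism of `𝕂`-ModPros `𝕂(M) ⊗ 𝕂(N) ≅ 𝕂(MN)`. -/
theorem kron_modpro_iso {K : Type} [CommSemiring K] (M N : ℕ) [NeZero M] :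
    (∀ (m n m' n' : ℕ) (A : HM K M m n) (B : HM K M m' n')
        (A' : HM K N m n) (B' : HM K N m' n'),
        kron (hcomp A B) (hcomp A' B') = hcomp (kron A A') (kron B B')) ∧
    (∀ (m n p : ℕ) (A : HM K M m n) (B : HM K M n p)
        (A' : HM K N m n) (B' : HM K N n p),
        kron (vcomp A B) (vcomp A' B') = vcomp (kron A A') (kron B B')) ∧
    (∀ p q : ℕ, ∃ φ : TensorProduct K (HM K M p q) (HM K N p q) ≃ₗ[K] HM K (M * N) p q,
        ∀ (A : HM K M p q) (B : HM K N p q), φ (A ⊗ₜ[K] B) = kron A B) :=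
  ⟨fun _ _ _ _ => kron_hcomp, fun _ _ _ => kron_vcomp,
    fun p q => ⟨kronLinearEquiv K M N p q, kronLinearEquiv_tmul⟩⟩
end

section
/- The quasi-direct sum fails to commute with horizontal composition: for M = N = 1, (I(1) ⊕̂ I(1)) ↔ (I(1) ⊕̂ I(1)) = I(2)^{↔2} differs from (I(1) ↔ I(1)) ⊕̂ (I(1) ↔ I(1)); concretely, the entry at index ([1,2],[1,2]) of I(2)^{↔2} equals 1 while the corresponding entry of I(1)^{↔2} ⊕̂ I(1)^{↔2} equals 0. -/
open BigOperators

/-- Quasi-direct sum of hypermatrices: entries of `A` on indices wholly in `[M]`,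
entries of `B` (shifted by `M`) on indices wholly in `M + [N]`, and `0` otherwise. -/
def qsum {K : Type} [Zero K] {M N p q : ℕ}
    (A : HM K M p q) (B : HM K N p q) : HM K (M + N) p q :=
  fun I J =>
    if h : (∀ t, (I t).val < M) ∧ (∀ t, (J t).val < M) then
      A (fun t => ⟨(I t).val, h.1 t⟩) (fun t => ⟨(J t).val, h.2 t⟩)
    else if h' : (∀ t, M ≤ (I t).val) ∧ (∀ t, M ≤ (J t).val) then
      B (fun t => ⟨(I t).val - M, by have := (I t).isLt; have := h'.1 t; omega⟩)
        (fun t => ⟨(J t).val - M, by have := (J t).isLt; have := h'.2 t; omega⟩)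
    else 0

theorem qsum_idHM_one {K : Type} [CommSemiring K] :
    qsum (idHM K 1 1) (idHM K 1 1) = idHM K 2 1 := by
  funext I J
  have hI : I = fun _ => I 0 := funext fun t => by rw [Subsingleton.elim t 0]
  have hJ : J = fun _ => J 0 := funext fun t => by rw [Subsingleton.elim t 0]
  rw [hI, hJ]
  have h2 : ∀ x : Fin 2, x = 0 ∨ x = 1 := by decide
  rcases h2 (I 0) with h | h <;> rcases h2 (J 0) with h' | h' <;>
    rw [h, h'] <;>
    simp [qsum, idHM, Subsingleton.elim, funext_iff, Fin.ext_iff]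

/-- The quasi-direct sum fails to commute with horizontal composition:
`(I(1) ⊕̂ I(1)) ↔ (I(1) ⊕̂ I(1)) = I(2)^{↔2}` differs from
`(I(1) ↔ I(1)) ⊕̂ (I(1) ↔ I(1))`; concretely the entry at `([1,2],[1,2])` of
`I(2)^{↔2}` is `1` while the corresponding entry of `I(1)^{↔2} ⊕̂ I(1)^{↔2}` is `0`. -/
theorem qsum_not_hcomp {K : Type} [CommSemiring K] (h01 : (0 : K) ≠ 1) :
    hcomp (qsum (idHM K 1 1) (idHM K 1 1)) (qsum (idHM K 1 1) (idHM K 1 1)) =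
        hcomp (idHM K 2 1) (idHM K 2 1) ∧
    hcomp (idHM K 2 1) (idHM K 2 1) ![(0 : Fin 2), 1] ![(0 : Fin 2), 1] = 1 ∧
    qsum (hcomp (idHM K 1 1) (idHM K 1 1)) (hcomp (idHM K 1 1) (idHM K 1 1))
        ![(0 : Fin 2), 1] ![(0 : Fin 2), 1] = 0 ∧
    hcomp (qsum (idHM K 1 1) (idHM K 1 1)) (qsum (idHM K 1 1) (idHM K 1 1)) ≠
      qsum (hcomp (idHM K 1 1) (idHM K 1 1)) (hcomp (idHM K 1 1) (idHM K 1 1)) := by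
  have h1 : hcomp (idHM K 2 1) (idHM K 2 1) ![(0 : Fin 2), 1] ![(0 : Fin 2), 1] = 1 := by
    simp [hcomp, idHM]
  have h2 : qsum (hcomp (idHM K 1 1) (idHM K 1 1)) (hcomp (idHM K 1 1) (idHM K 1 1))
      ![(0 : Fin 2), 1] ![(0 : Fin 2), 1] = 0 := by
    rw [qsum]
    rw [dif_neg, dif_neg]
    · rintro ⟨h, -⟩; exact absurd (h 0) (by decide)
    · rintro ⟨h, -⟩; exact absurd (h 1) (by decide)
  refine ⟨by rw [qsum_idHM_one], h1, h2, fun h => ?_⟩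
  have := congrFun (congrFun h ![(0 : Fin 2), 1]) ![(0 : Fin 2), 1]
  rw [qsum_idHM_one] at this
  rw [h1, h2] at this
  exact h01 this.symm
end

section
/- The explicit 2-dimensional assignment μ(∪) ∈ 𝕂(2,0,2) with entries μ(∪)_{11} = 2−d, μ(∪)_{12} = 0, μ(∪)_{21} = d−2, μ(∪)_{22} = 1, and μ(∩) ∈ 𝕂(2,2,0) with entries μ(∩)^{11} = 1/(2−d), μ(∩)^{12} = 0, μ(∩)^{21} = 1, μ(∩)^{22} = 1, satisfies the Temperley–Lieb relations: μ(∪) ↕ μ(∩) = d (the scalar), and (μ(∪) ↔ Id₁) ↕ (Id₁ ↔ μ(∩)) = (Id₁ ↔ μ(∪)) ↕ (μ(∩) ↔ Id₁) = Id₁ (the 2×2 identity matrix). -/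
open BigOperators

/-- The explicit 2-dimensional cup hypermatrix `μ(∪) ∈ 𝕂(2,0,2)` with entries
`(2−d, 0, d−2, 1)` at indices `(11,12,21,22)`. -/
def cupHM (K : Type) [Field K] (d : K) : HM K 2 0 2 := fun _ J =>
  if J 0 = 0 ∧ J 1 = 0 then 2 - d
  else if J 0 = 0 ∧ J 1 = 1 then 0
  else if J 0 = 1 ∧ J 1 = 0 then d - 2
  else 1

/-- The explicit 2-dimensional cap hypermatrix `μ(∩) ∈ 𝕂(2,2,0)` with entries
`(1/(2−d), 0, 1, 1)` at indices `(11,12,21,22)`. -/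
def capHM (K : Type) [Field K] (d : K) : HM K 2 2 0 := fun I _ =>
  if I 0 = 0 ∧ I 1 = 0 then (2 - d)⁻¹
  else if I 0 = 0 ∧ I 1 = 1 then 0
  else 1

/-!
Read `μ(∪)` and `μ(∩)` as the `N × N` matrices `U a b = μ(∪)_{ab}` and `C a b = μ(∩)^{ab}`. Then the
closed loop `μ(∪) ↕ μ(∩)` is the pairing `∑ U a b * C a b = tr (U Cᵀ)`, and the two zigzags are the
`1 → 1` hypermatrices of `(U C)ᵀ` and `C U`. For the given entries `U C = 1`, hence also `C U = 1`,
and the pairing is `(2 - d) / (2 - d) + (d - 2) + 1 = d`.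
-/

open scoped Matrix

section Hypermatrix

variable {K : Type} {N : ℕ}

theorem Fintype.sum_pi_fin_succ [AddCommMonoid K] {n : ℕ} (f : (Fin (n + 1) → Fin N) → K) :
    ∑ L, f L = ∑ a : Fin N, ∑ L : Fin n → Fin N, f (Matrix.vecCons a L) := by
  rw [← (Fin.consEquiv fun _ => Fin N).sum_comp f, Fintype.sum_prod_type]
  rfl

def HM.ofMatrix (M : Matrix (Fin N) (Fin N) K) : HM K N 1 1 := fun I J => M (I 0) (J 0)

def cupMatrix (A : HM K N 0 2) : Matrix (Fin N) (Fin N) K := Matrix.of fun a b => A finZeroElim ![a, b]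

def capMatrix (B : HM K N 2 0) : Matrix (Fin N) (Fin N) K := Matrix.of fun a b => B ![a, b] finZeroElim

theorem HM.apply_eq_cupMatrix (A : HM K N 0 2) (I : Fin 0 → Fin N) (J : Fin 2 → Fin N) :
    A I J = cupMatrix A (J 0) (J 1) := by
  rw [cupMatrix, Matrix.of_apply, Subsingleton.elim I finZeroElim]
  congr
  funext j
  fin_cases j <;> rfl

theorem HM.apply_eq_capMatrix (B : HM K N 2 0) (I : Fin 2 → Fin N) (J : Fin 0 → Fin N) :
    B I J = capMatrix B (I 0) (I 1) := by
  rw [capMatrix, Matrix.of_apply, Subsingleton.elim J finZeroElim]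
  congr
  funext i
  fin_cases i <;> rfl

theorem idHM_one_apply [Zero K] [One K] (I J : Fin 1 → Fin N) :
    idHM K N 1 I J = if I 0 = J 0 then 1 else 0 := by
  simp [idHM, funext_iff, Fin.forall_fin_one]

theorem idHM_one_eq_ofMatrix [Zero K] [One K] : idHM K N 1 = HM.ofMatrix 1 := by
  funext I J
  rw [idHM_one_apply, HM.ofMatrix, Matrix.one_apply]

theorem vcomp_hcomp_cup_id_hcomp_id_cap [Semiring K] (A : HM K N 0 2) (B : HM K N 2 0) :
    vcomp (hcomp A (idHM K N 1) : HM K N 1 3) (hcomp (idHM K N 1) B : HM K N 3 1) =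
      HM.ofMatrix (cupMatrix A * capMatrix B)ᵀ := by
  funext I J
  simp only [vcomp, hcomp, HM.apply_eq_cupMatrix A, HM.apply_eq_capMatrix B, idHM_one_apply]
  simp [Fintype.sum_pi_fin_succ, HM.ofMatrix, Matrix.mul_apply]

theorem vcomp_hcomp_id_cup_hcomp_cap_id [CommSemiring K] (A : HM K N 0 2) (B : HM K N 2 0) :
    vcomp (hcomp (idHM K N 1) A : HM K N 1 3) (hcomp B (idHM K N 1) : HM K N 3 1) =
      HM.ofMatrix (capMatrix B * cupMatrix A) := by
  funext I J
  simp only [vcomp, hcomp, HM.apply_eq_cupMatrix A, HM.apply_eq_capMatrix B, idHM_one_apply]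
  simp [Fintype.sum_pi_fin_succ, HM.ofMatrix, Matrix.mul_apply, mul_comm]

theorem vcomp_cup_cap [Semiring K] (A : HM K N 0 2) (B : HM K N 2 0) :
    vcomp A B = fun _ _ => (cupMatrix A * (capMatrix B)ᵀ).trace := by
  funext I J
  simp only [vcomp, HM.apply_eq_cupMatrix A, HM.apply_eq_capMatrix B]
  simp [Fintype.sum_pi_fin_succ, Matrix.trace, Matrix.mul_apply]

end Hypermatrix

section TwoDimensional

variable {K : Type} [Field K]

theorem cupMatrix_cupHM (d : K) : cupMatrix (cupHM K d) = !![2 - d, 0; d - 2, 1] := by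
  ext a b
  fin_cases a <;> fin_cases b <;> rfl

theorem capMatrix_capHM (d : K) : capMatrix (capHM K d) = !![(2 - d)⁻¹, 0; 1, 1] := by
  ext a b
  fin_cases a <;> fin_cases b <;> rfl

theorem cupMatrix_mul_capMatrix {d : K} (hd : d ≠ 2) :
    cupMatrix (cupHM K d) * capMatrix (capHM K d) = 1 := by
  have h2d : (2 : K) - d ≠ 0 := sub_ne_zero.mpr hd.symm
  rw [cupMatrix_cupHM, capMatrix_capHM, Matrix.mul_fin_two, Matrix.one_fin_two]
  have hneg : (d - 2) * (2 - d)⁻¹ = -1 := by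
    rw [← neg_sub, neg_mul, mul_inv_cancel₀ h2d]
  simp [hneg, h2d]

theorem trace_cupMatrix_mul_capMatrix_transpose {d : K} (hd : d ≠ 2) :
    (cupMatrix (cupHM K d) * (capMatrix (capHM K d))ᵀ).trace = d := by
  have h2d : (2 : K) - d ≠ 0 := sub_ne_zero.mpr hd.symm
  rw [cupMatrix_cupHM, capMatrix_capHM, Matrix.trace_fin_two]
  simp only [Fin.isValue, Matrix.mul_apply, Matrix.of_apply, Matrix.cons_val', Matrix.cons_val_fin_one,
    Matrix.cons_val_zero, Matrix.transpose_apply, Fin.sum_univ_two, Matrix.cons_val_one, mul_zero,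
    add_zero, mul_one]
  field_simp
  ring

end TwoDimensional

/-- The explicit 2-dimensional assignment satisfies the Temperley–Lieb relations:
`μ(∪) ↕ μ(∩) = d`, and
`(μ(∪) ↔ Id₁) ↕ (Id₁ ↔ μ(∩)) = (Id₁ ↔ μ(∪)) ↕ (μ(∩) ↔ Id₁) = Id₁`. -/
theorem temperley_lieb_rep {K : Type} [Field K] (d : K) (hd : d ≠ 2) :
    vcomp (cupHM K d) (capHM K d) = (fun _ _ => d) ∧
    vcomp (hcomp (cupHM K d) (idHM K 2 1) : HM K 2 1 3)
        (hcomp (idHM K 2 1) (capHM K d) : HM K 2 3 1) = idHM K 2 1 ∧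
    vcomp (hcomp (idHM K 2 1) (cupHM K d) : HM K 2 1 3)
        (hcomp (capHM K d) (idHM K 2 1) : HM K 2 3 1) = idHM K 2 1 := by
  have hUC := cupMatrix_mul_capMatrix hd
  refine ⟨?_, ?_, ?_⟩
  · rw [vcomp_cup_cap, trace_cupMatrix_mul_capMatrix_transpose hd]
  · rw [vcomp_hcomp_cup_id_hcomp_id_cap, hUC, Matrix.transpose_one, idHM_one_eq_ofMatrix]
  · rw [vcomp_hcomp_id_cup_hcomp_cap_id, mul_eq_one_comm.mp hUC, idHM_one_eq_ofMatrix]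
end
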